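/- arXiv:2306.03495 — 2 statements merged into one kernel-verified Lean document; each statement's English description precedes it below -/
import Mathlib

section
/- Let p be a prime number, let a_0, a_1, …, a_{n−1} ∈ ℤ_p[[z]], and let u ∈ 1 + zℚ_p[[z]]. If Σ_{i=0}^{n−1} a_i(z)·(δ^i u)(z^p) = u(z) (equivalently, A(u(z^p)) = u for the operator A = a_0 + (a_1/p)·δ + ⋯ + (a_{n−1}/p^{n−1})·δ^{n−1}, since δ^i(u(z^p)) = p^i·(δ^i u)(z^p)), then u ∈ 1 + zℤ_p[[z]]. -/
/-! Strong induction on the degree. Since `p ≥ 2`, the coefficient of `z^k` (`k > 0`) in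
`Σ aᵢ (δⁱu)(z^p)` only involves coefficients of `u` of index `k / p < k`, and `δ` multiplies
the coefficient of `z^j` by the integer `j`, which has norm `≤ 1` in the ultrametric field `ℚ_p`. -/

open PowerSeries

noncomputable section

/-- The derivation `δ = z d/dz` on power series: `δ(Σ aₙ zⁿ) = Σ n aₙ zⁿ`. -/
def deltaOp {K : Type*} [Semiring K] (f : PowerSeries K) : PowerSeries K :=
  PowerSeries.mk fun k => (k : K) * PowerSeries.coeff k f

/-- Substitution `z ↦ z^m` on power series. -/
def substPow {K : Type*} [Semiring K] (m : ℕ) (f : PowerSeries K) : PowerSeries K :=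
  PowerSeries.mk fun k => if k % m = 0 then PowerSeries.coeff (k / m) f else 0

/-- The Cartier operator `Λ_m : Σ aᵢ zⁱ ↦ Σ a_{im} zⁱ`. -/
def cartier {K : Type*} [Semiring K] (m : ℕ) (f : PowerSeries K) : PowerSeries K :=
  PowerSeries.mk fun k => PowerSeries.coeff (k * m) f

/-- The action of the monic operator `L = δ^n + Σ_{i<n} aᵢ δ^i` on a power series. -/
def applyOp {K : Type*} [Semiring K] {n : ℕ} (a : Fin n → PowerSeries K)
    (y : PowerSeries K) : PowerSeries K :=
  deltaOp^[n] y + ∑ i : Fin n, a i * deltaOp^[(i : ℕ)] y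

/-- `L⁽¹⁾ = Σ_{k=1}^{n} k·a_k·δ^{k−1}`, with `a_n = 1`. -/
def applyOp1 {K : Type*} [Semiring K] {n : ℕ} (a : Fin n → PowerSeries K)
    (y : PowerSeries K) : PowerSeries K :=
  (n : K) • deltaOp^[n - 1] y + ∑ i : Fin n, ((i : ℕ) : K) • (a i * deltaOp^[(i : ℕ) - 1] y)

/-- Companion matrix of the monic operator `δ^n + Σ_{i<n} aᵢ δ^i`. -/
def companionM {K : Type*} [Ring K] {n : ℕ} (a : Fin n → PowerSeries K) :
    Matrix (Fin n) (Fin n) (PowerSeries K) :=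
  Matrix.of fun i j =>
    if (i : ℕ) + 1 = n then -a j else if (j : ℕ) = (i : ℕ) + 1 then 1 else 0

/-- Evaluation of a matrix of power series at `z = 0` (entrywise constant term,
viewed again as constant power series). -/
def evalZero {K : Type*} [Semiring K] {n : ℕ} (M : Matrix (Fin n) (Fin n) (PowerSeries K)) :
    Matrix (Fin n) (Fin n) (PowerSeries K) :=
  M.map fun f => PowerSeries.C (PowerSeries.constantCoeff f)

/-- The sequence `A_0 = I`, `A_{j+1} = δA_j + A_j (A − jI)`. -/
def Aseq {K : Type*} [CommRing K] {n : ℕ} (A : Matrix (Fin n) (Fin n) (PowerSeries K)) :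
    ℕ → Matrix (Fin n) (Fin n) (PowerSeries K)
  | 0 => 1
  | j + 1 => (Aseq A j).map deltaOp +
      Aseq A j * (A - (j : K) • (1 : Matrix (Fin n) (Fin n) (PowerSeries K)))

/-- `r(L) ≥ 1`: for every real `0 < r < 1`, `‖A_j/j!‖·r^j → 0` as `j → ∞`,
where `‖·‖` is the (entrywise supremum of the) Gauss norm. -/
def RadiusGE1 {K : Type*} [NormedField K] {n : ℕ}
    (A : Matrix (Fin n) (Fin n) (PowerSeries K)) : Prop :=
  ∀ r : ℝ, 0 < r → r < 1 → ∀ ε : ℝ, 0 < ε → ∃ J : ℕ, ∀ j : ℕ, J ≤ j →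
    ∀ i i' : Fin n, ∀ k : ℕ,
      ‖PowerSeries.coeff k (Aseq A j i i')‖ * ‖((j.factorial : K))⁻¹‖ * r ^ j < ε

/-- A `p`-integral Frobenius structure for the monic operator with coefficients `a`:
a matrix `Φ ∈ Mₙ(ℤ_p[[z]])` with `det Φ ≠ 0` and `δΦ = AΦ − pΦA(z^p)`. -/
def IsPIntFrob (p : ℕ) [Fact p.Prime] {n : ℕ} (a : Fin n → PowerSeries ℚ_[p])
    (Φ : Matrix (Fin n) (Fin n) (PowerSeries ℚ_[p])) : Prop :=
  (∀ i j : Fin n, ∀ k : ℕ, ‖PowerSeries.coeff k (Φ i j)‖ ≤ 1) ∧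
  Φ.det ≠ 0 ∧
  Φ.map deltaOp =
    companionM a * Φ - (p : ℚ_[p]) • (Φ * (companionM a).map (substPow p))

/-- `exp(h) = Σ_j h^j / j!` (intended for `h` with zero constant term). -/
def psExp {K : Type*} [Field K] (h : PowerSeries K) : PowerSeries K :=
  PowerSeries.mk fun k =>
    ∑ j ∈ Finset.range (k + 1), PowerSeries.coeff k (h ^ j) / (j.factorial : K)

/-- `(f, g)` is the canonical solution pair of the MUM operator with coefficients `a`:
`f ∈ 1 + z K[[z]]`, `g ∈ z K[[z]]`, `L(f) = 0` and `L(g) + L⁽¹⁾(f) = 0`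
(equivalently, `f` and `f·Log z + g` are solutions of `L`). -/
def IsCanonicalPair {K : Type*} [Field K] {n : ℕ} (a : Fin n → PowerSeries K)
    (f g : PowerSeries K) : Prop :=
  PowerSeries.constantCoeff f = 1 ∧ PowerSeries.constantCoeff g = 0 ∧
  applyOp a f = 0 ∧ applyOp a g + applyOp1 a f = 0

end

lemma coeff_deltaOp_iterate {R : Type*} [Semiring R] (i : ℕ) (f : R⟦X⟧) (k : ℕ) :
    coeff k (deltaOp^[i] f) = (k : R) ^ i * coeff k f := by
  induction i with
  | zero => simp
  | succ i ih =>
    rw [Function.iterate_succ_apply', deltaOp, coeff_mk, ih, ← mul_assoc, pow_succ']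

lemma coeff_substPow {R : Type*} [Semiring R] (m k : ℕ) (f : R⟦X⟧) :
    coeff k (substPow m f) = if k % m = 0 then coeff (k / m) f else 0 := by
  rw [substPow, coeff_mk]

section Ultrametric

variable {R : Type*} [SeminormedRing R] [NormOneClass R] [IsUltrametricDist R]

omit [NormOneClass R] in
lemma norm_coeff_mul_le_one {f g : R⟦X⟧} {k : ℕ}
    (hf : ∀ j ≤ k, ‖coeff j f‖ ≤ 1) (hg : ∀ j ≤ k, ‖coeff j g‖ ≤ 1) :
    ‖coeff k (f * g)‖ ≤ 1 := by
  rw [coeff_mul]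
  refine IsUltrametricDist.norm_sum_le_of_forall_le_of_nonneg zero_le_one fun x hx ↦ ?_
  have hx : x.1 + x.2 = k := Finset.HasAntidiagonal.mem_antidiagonal.mp hx
  calc ‖coeff x.1 f * coeff x.2 g‖ ≤ ‖coeff x.1 f‖ * ‖coeff x.2 g‖ := norm_mul_le _ _
    _ ≤ 1 * 1 := mul_le_mul (hf _ (by omega)) (hg _ (by omega)) (norm_nonneg _) zero_le_one
    _ = 1 := one_mul 1

lemma norm_coeff_deltaOp_iterate_le (i : ℕ) (f : R⟦X⟧) (k : ℕ) :
    ‖coeff k (deltaOp^[i] f)‖ ≤ ‖coeff k f‖ := by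
  rw [coeff_deltaOp_iterate]
  calc ‖(k : R) ^ i * coeff k f‖ ≤ ‖(k : R)‖ ^ i * ‖coeff k f‖ :=
        (norm_mul_le _ _).trans (by gcongr; exact norm_pow_le _ _)
    _ ≤ 1 * ‖coeff k f‖ := by
        gcongr; exact pow_le_one₀ (norm_nonneg _) (IsUltrametricDist.norm_natCast_le_one R k)
    _ = ‖coeff k f‖ := one_mul _

omit [NormOneClass R] [IsUltrametricDist R] in
lemma norm_coeff_substPow_le_one {m k : ℕ} (hm : 1 < m) (hk : 0 < k) {f : R⟦X⟧}
    (hf : ∀ j < k, ‖coeff j f‖ ≤ 1) : ∀ j ≤ k, ‖coeff j (substPow m f)‖ ≤ 1 := by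
  intro j hj
  rw [coeff_substPow]
  split_ifs
  · exact hf _ <| (Nat.div_lt_iff_lt_mul (by omega)).mpr <|
      hj.trans_lt (lt_mul_of_one_lt_right hk hm)
  · simp

lemma norm_coeff_sum_mul_substPow_le_one {n m k : ℕ} (hm : 1 < m) (hk : 0 < k)
    {a : Fin n → R⟦X⟧} (ha : ∀ i j, ‖coeff j (a i)‖ ≤ 1) {u : R⟦X⟧}
    (hu : ∀ j < k, ‖coeff j u‖ ≤ 1) :
    ‖coeff k (∑ i : Fin n, a i * substPow m (deltaOp^[(i : ℕ)] u))‖ ≤ 1 := by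
  rw [map_sum]
  refine IsUltrametricDist.norm_sum_le_of_forall_le_of_nonneg zero_le_one fun i _ ↦ ?_
  refine norm_coeff_mul_le_one (fun j _ ↦ ha i j) (norm_coeff_substPow_le_one hm hk ?_)
  exact fun j hj ↦ (norm_coeff_deltaOp_iterate_le _ u j).trans (hu j hj)

end Ultrametric

/-- if `u ∈ 1 + zℚ_p[[z]]` satisfies `Σ_i a_i·(δ^i u)(z^p) = u` with
`a_i ∈ ℤ_p[[z]]`, then `u ∈ 1 + zℤ_p[[z]]`. -/
theorem statement9 (p : ℕ) [Fact p.Prime] (n : ℕ)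
    (a : Fin n → PowerSeries ℚ_[p])
    -- the `a_i` lie in `ℤ_p[[z]]`
    (hint : ∀ i, ∀ k : ℕ, ‖PowerSeries.coeff k (a i)‖ ≤ 1)
    (u : PowerSeries ℚ_[p])
    -- `u ∈ 1 + zℚ_p[[z]]`
    (hu0 : PowerSeries.constantCoeff u = 1)
    -- `Σ_{i=0}^{n−1} a_i(z)·(δ^i u)(z^p) = u(z)`
    (heq : ∑ i : Fin n, a i * substPow p (deltaOp^[(i : ℕ)] u) = u) :
    -- `u ∈ 1 + zℤ_p[[z]]`
    ∀ k : ℕ, ‖PowerSeries.coeff k u‖ ≤ 1 := by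
  intro k
  induction k using Nat.strong_induction_on with
  | _ k ih =>
  rcases Nat.eq_zero_or_pos k with rfl | hk
  · simp [coeff_zero_eq_constantCoeff_apply, hu0]
  · rw [← heq]
    exact norm_coeff_sum_mul_substPow_le_one (Fact.out : p.Prime).one_lt hk hint ih
end

section
/- Let p be a prime number and let f ∈ zℚ_p[[z]]. If (1/p)·f(z^p) − f(z) ∈ zℤ_p[[z]], then exp(f(z)) ∈ 1 + zℤ_p[[z]]. -/
open PowerSeries

noncomputable section

/-!
Put `F = exp f`. Since `exp` turns sums into products and commutes with `z ↦ z^p`,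
`F(z^p) = F(z)^p · G` with `G = exp(p·h)` and `h = (1/p)·f(z^p) − f ∈ zℤ_p[[z]]`; as
`v_p(j!) < j`, every `p^j h^j / j!` with `j ≥ 1` lies in `p ℤ_p[[z]]`, so `G ≡ 1 mod p`.
Dwork's argument then shows by induction that the coefficients of `F` are integral: if those
below `n` are, let `T` be the truncation of `F` below degree `n` and `F = T + zⁿE`. Comparing
coefficients of `zⁿ` in `F(z^p) = F^p G` gives
`p·E(0) = [T(z^p) − T^p]ₙ − [T^p (G − 1)]ₙ`, and both terms lie in `pℤ_p` (the first by
Frobenius modulo `p`), whence `E(0) ∈ ℤ_p`.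
-/

open PowerSeries Finset

section CommRing

variable {K : Type*} [CommRing K]

@[simp]
theorem coeff_deltaOp (f : K⟦X⟧) (k : ℕ) : coeff k (deltaOp f) = k * coeff k f := by
  simp [deltaOp]

@[simp]
theorem constantCoeff_deltaOp (f : K⟦X⟧) : constantCoeff (deltaOp f) = 0 := by
  rw [← coeff_zero_eq_constantCoeff_apply]
  simp

theorem deltaOp_eq_smul_derivative (f : K⟦X⟧) : deltaOp f = ((X : K⟦X⟧) • d⁄dX K) f := by
  ext (_ | k)
  · simp
  · simp [coeff_derivative, mul_comm]

theorem deltaOp_add (f g : K⟦X⟧) : deltaOp (f + g) = deltaOp f + deltaOp g := by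
  simp only [deltaOp_eq_smul_derivative, map_add]

theorem deltaOp_mul (f g : K⟦X⟧) : deltaOp (f * g) = deltaOp f * g + f * deltaOp g := by
  simp only [deltaOp_eq_smul_derivative, Derivation.leibniz, smul_eq_mul]
  ring

theorem substPow_eq_expand {m : ℕ} (hm : m ≠ 0) (f : K⟦X⟧) : substPow m f = expand m hm f := by
  ext k
  simp [substPow, coeff_expand, Nat.dvd_iff_mod_eq_zero]

theorem constantCoeff_substPow {m : ℕ} (hm : m ≠ 0) (f : K⟦X⟧) :
    constantCoeff (substPow m f) = constantCoeff f := by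
  rw [substPow_eq_expand hm, constantCoeff_expand]

theorem eq_of_forall_X_pow_dvd_sub {f g : K⟦X⟧} (h : ∀ N, X ^ N ∣ f - g) : f = g := by
  ext k
  simpa [sub_eq_zero] using X_pow_dvd_iff.mp (h (k + 1)) k (Nat.lt_succ_self k)

theorem mul_coeff_sub_eq_of_substPow_eq_pow_mul {m n : ℕ} (hm : 1 < m) (hn : n ≠ 0)
    {F G T : K⟦X⟧} (hF₀ : constantCoeff F = 1) (hFG : substPow m F = F ^ m * G)
    (hFT : X ^ n ∣ F - T) :
    (m : K) * coeff n (F - T) = coeff n (substPow m T - T ^ m) - coeff n (T ^ m * (G - 1)) := by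
  have hm₀ : m ≠ 0 := by omega
  obtain ⟨E, hE⟩ := hFT
  have hG₀ : constantCoeff G = 1 := by
    simpa [constantCoeff_substPow hm₀, hF₀] using (congrArg constantCoeff hFG).symm
  have hT₀ : constantCoeff T = 1 := by
    have := congrArg constantCoeff hE
    simp [hF₀, zero_pow hn, sub_eq_zero] at this
    exact this.symm
  set S := ∑ i ∈ range m, F ^ i * T ^ (m - 1 - i)
  have hS₀ : constantCoeff S = m := by simp [S, hF₀, hT₀]
  have hFm : F ^ m = T ^ m + X ^ n * (E * S) := by
    have := geom_sum₂_mul F T m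
    rw [hE] at this
    linear_combination -this
  have hsubst : coeff n (substPow m F) = coeff n (substPow m T) := by
    rw [sub_eq_iff_eq_add'.mp hE, substPow_eq_expand hm₀, substPow_eq_expand hm₀, map_add,
      map_mul, map_pow, expand_X, ← pow_mul, map_add, coeff_X_pow_mul',
      if_neg (by nlinarith [Nat.pos_of_ne_zero hn]), add_zero]
  have hpow : coeff n (F ^ m * G) = coeff n (T ^ m * G) + m * coeff n (F - T) := by
    rw [hFm, add_mul, map_add, mul_assoc, coeff_X_pow_mul', if_pos le_rfl, Nat.sub_self, hE,
      coeff_X_pow_mul', if_pos le_rfl, Nat.sub_self]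
    simp [hS₀, hG₀, mul_comm]
  have := congrArg (coeff n) hFG
  rw [hsubst, hpow] at this
  simp only [map_sub, mul_sub, mul_one] at this ⊢
  linear_combination -this

end CommRing

section Field

variable {K : Type*} [Field K]

theorem coeff_pow_eq_zero_of_lt {A : K⟦X⟧} (hA : constantCoeff A = 0) {j k : ℕ} (hkj : k < j) :
    coeff k (A ^ j) = 0 :=
  X_pow_dvd_iff.mp (pow_dvd_pow_of_dvd (X_dvd_iff.mpr hA) j) k hkj

@[simp]
theorem constantCoeff_psExp (A : K⟦X⟧) : constantCoeff (psExp A) = 1 := by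
  rw [← coeff_zero_eq_constantCoeff_apply]
  simp [psExp]

def psExpPartial (N : ℕ) (A : K⟦X⟧) : K⟦X⟧ :=
  ∑ j ∈ range N, (j.factorial : K)⁻¹ • A ^ j

theorem X_pow_dvd_psExp_sub_psExpPartial {A : K⟦X⟧} (hA : constantCoeff A = 0) (N : ℕ) :
    X ^ N ∣ psExp A - psExpPartial N A := by
  refine X_pow_dvd_iff.mpr fun k hk => ?_
  have hsub : range (k + 1) ⊆ range N := range_subset_range.mpr hk
  simp only [psExp, psExpPartial, map_sub, coeff_mk, map_sum, coeff_smul, smul_eq_mul]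
  rw [← sum_subset hsub fun j _ hj => ?_, sub_eq_zero]
  · exact sum_congr rfl fun j _ => div_eq_inv_mul _ _
  · rw [coeff_pow_eq_zero_of_lt hA (by simpa using hj), mul_zero]

theorem psExp_expand {m : ℕ} (hm : m ≠ 0) {A : K⟦X⟧} (hA : constantCoeff A = 0) :
    psExp (expand m hm A) = expand m hm (psExp A) := by
  have hmA : constantCoeff (expand m hm A) = 0 := by simp [hA]
  refine eq_of_forall_X_pow_dvd_sub fun N => ?_
  have hexpand : expand m hm (psExpPartial N A) = psExpPartial N (expand m hm A) := by
    simp [psExpPartial, map_sum]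
  have hdvd : X ^ N ∣ expand m hm (psExp A - psExpPartial N A) := by
    refine (pow_dvd_pow X (Nat.le_mul_of_pos_left N (Nat.pos_of_ne_zero hm))).trans ?_
    simpa [pow_mul] using map_dvd (expand m hm) (X_pow_dvd_psExp_sub_psExpPartial hA N)
  simpa [hexpand] using dvd_sub (X_pow_dvd_psExp_sub_psExpPartial hmA N) hdvd

end Field

section CharZero

variable {K : Type*} [Field K] [CharZero K]

theorem deltaOp_psExpPartial_succ (A : K⟦X⟧) (N : ℕ) :
    deltaOp (psExpPartial (N + 1) A) = deltaOp A * psExpPartial N A := by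
  simp only [deltaOp_eq_smul_derivative, psExpPartial, map_sum, Derivation.map_smul,
    Derivation.leibniz_pow, mul_sum]
  rw [sum_range_succ', zero_smul, smul_zero, add_zero]
  refine sum_congr rfl fun j _ => ?_
  have hj : ((j + 1 : ℕ) : K) ≠ 0 := Nat.cast_ne_zero.mpr j.succ_ne_zero
  rw [Nat.add_sub_cancel, Nat.factorial_succ, Nat.cast_mul, ← Nat.cast_smul_eq_nsmul K, smul_smul,
    mul_inv, mul_comm _ (j.factorial : K)⁻¹, mul_assoc, inv_mul_cancel₀ hj, mul_one, smul_eq_mul,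
    mul_comm, mul_smul_comm]

theorem deltaOp_psExp {A : K⟦X⟧} (hA : constantCoeff A = 0) :
    deltaOp (psExp A) = deltaOp A * psExp A := by
  ext k
  have h₁ := X_pow_dvd_iff.mp (X_pow_dvd_psExp_sub_psExpPartial hA (k + 2)) k (by omega)
  have h₂ := X_pow_dvd_iff.mp
    (dvd_mul_of_dvd_right (X_pow_dvd_psExp_sub_psExpPartial hA (k + 1)) (deltaOp A)) k (by omega)
  rw [map_sub, sub_eq_zero] at h₁
  rw [mul_sub, map_sub, sub_eq_zero] at h₂
  rw [coeff_deltaOp, h₁, ← coeff_deltaOp, deltaOp_psExpPartial_succ, h₂]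

theorem eq_of_deltaOp_eq_mul {C F G : K⟦X⟧} (hC : constantCoeff C = 0)
    (h₀ : constantCoeff F = constantCoeff G) (hF : deltaOp F = C * F) (hG : deltaOp G = C * G) :
    F = G := by
  have hD : deltaOp (F - G) = C * (F - G) := by
    rw [mul_sub, ← hF, ← hG]
    ext
    simp [mul_sub]
  refine eq_of_forall_X_pow_dvd_sub fun N => ?_
  induction N with
  | zero => simp
  | succ N ih =>
    refine X_pow_dvd_iff.mpr fun m hm => ?_
    rcases Nat.lt_succ_iff_lt_or_eq.mp hm with hm | rfl
    · exact X_pow_dvd_iff.mp ih m hm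
    rcases Nat.eq_zero_or_pos m with rfl | hm₀
    · simp [h₀]
    have hCD : X ^ (m + 1) ∣ C * (F - G) :=
      pow_succ' (X : K⟦X⟧) m ▸ mul_dvd_mul (X_dvd_iff.mpr hC) ih
    have hm := congrArg (coeff m) hD
    rw [coeff_deltaOp, X_pow_dvd_iff.mp hCD m m.lt_succ_self] at hm
    exact (mul_eq_zero.mp hm).resolve_left (Nat.cast_ne_zero.mpr hm₀.ne')

theorem psExp_add {A B : K⟦X⟧} (hA : constantCoeff A = 0) (hB : constantCoeff B = 0) :
    psExp (A + B) = psExp A * psExp B := by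
  have hAB : constantCoeff (A + B) = 0 := by simp [hA, hB]
  refine eq_of_deltaOp_eq_mul (C := deltaOp (A + B)) (by simp) (by simp) (deltaOp_psExp hAB) ?_
  rw [deltaOp_mul, deltaOp_psExp hA, deltaOp_psExp hB, deltaOp_add]
  ring

theorem psExp_nsmul {A : K⟦X⟧} (hA : constantCoeff A = 0) (n : ℕ) :
    psExp (n • A) = psExp A ^ n := by
  induction n with
  | zero => ext k; simp [psExp, sum_range_succ', coeff_one]
  | succ n ih => rw [succ_nsmul, psExp_add (by simp [hA]) hA, ih, pow_succ]

theorem substPow_psExp {m : ℕ} (hm : m ≠ 0) {A : K⟦X⟧} (hA : constantCoeff A = 0) :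
    substPow m (psExp A) = psExp A ^ m * psExp (substPow m A - m • A) := by
  rw [substPow_eq_expand hm, substPow_eq_expand hm, ← psExp_expand hm hA, ← psExp_nsmul hA,
    ← psExp_add (by simp [hA]) (by simp [hA]), add_sub_cancel]

end CharZero

section Ultrametric

variable {R : Type*} [NormedCommRing R] [IsUltrametricDist R]

theorem norm_coeff_mul_le {A B : R⟦X⟧} {a b : ℝ} (hA : ∀ k, ‖coeff k A‖ ≤ a)
    (hB : ∀ k, ‖coeff k B‖ ≤ b) (k : ℕ) : ‖coeff k (A * B)‖ ≤ a * b := by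
  have ha : 0 ≤ a := (norm_nonneg _).trans (hA 0)
  have hb : 0 ≤ b := (norm_nonneg _).trans (hB 0)
  rw [coeff_mul]
  refine IsUltrametricDist.norm_sum_le_of_forall_le_of_nonneg (mul_nonneg ha hb) fun i _ => ?_
  exact (norm_mul_le _ _).trans (mul_le_mul (hA _) (hB _) (norm_nonneg _) ha)

theorem norm_coeff_pow_le_one [NormOneClass R] {A : R⟦X⟧} (hA : ∀ k, ‖coeff k A‖ ≤ 1) (n : ℕ)
    (k : ℕ) : ‖coeff k (A ^ n)‖ ≤ 1 := by
  induction n generalizing k with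
  | zero => rw [pow_zero, coeff_one]; split_ifs <;> simp
  | succ n ih => simpa [pow_succ] using norm_coeff_mul_le ih hA k

end Ultrametric

section Padic

variable {p : ℕ} [hp : Fact p.Prime]

theorem Padic.norm_prime_pow_div_factorial_le {j : ℕ} (hj : j ≠ 0) :
    ‖(p : ℚ_[p]) ^ j / j.factorial‖ ≤ (p : ℝ)⁻¹ := by
  have hv := padicValNat_factorial_lt_of_ne_zero p hj
  have hp₁ : (1 : ℝ) < p := mod_cast hp.out.one_lt
  rw [norm_div, Padic.norm_p_pow, Padic.norm_eq_zpow_neg_valuation (mod_cast j.factorial_ne_zero),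
    Padic.valuation_natCast, ← zpow_sub₀ (by positivity), ← zpow_neg_one]
  exact zpow_le_zpow_right₀ hp₁.le (by omega)

theorem norm_coeff_psExp_prime_smul_sub_one_le {h : ℚ_[p]⟦X⟧} (hh : ∀ k, ‖coeff k h‖ ≤ 1)
    (k : ℕ) : ‖coeff k (psExp ((p : ℚ_[p]) • h) - 1)‖ ≤ (p : ℝ)⁻¹ := by
  rw [map_sub, psExp, coeff_mk, sum_range_succ', pow_zero, Nat.factorial_zero, Nat.cast_one,
    div_one, add_sub_cancel_right]
  refine IsUltrametricDist.norm_sum_le_of_forall_le_of_nonneg (by positivity) fun j _ => ?_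
  rw [smul_pow, coeff_smul, smul_eq_mul, mul_div_right_comm, norm_mul]
  simpa using mul_le_mul (Padic.norm_prime_pow_div_factorial_le (p := p) j.succ_ne_zero)
    (norm_coeff_pow_le_one hh (j + 1) k) (norm_nonneg _) (by positivity)

theorem PadicInt.norm_le_inv_of_toZMod_eq_zero {x : ℤ_[p]} (hx : PadicInt.toZMod x = 0) :
    ‖x‖ ≤ (p : ℝ)⁻¹ := by
  have hmem : x ∈ Ideal.span {(p : ℤ_[p]) ^ 1} := by
    rw [pow_one, ← PadicInt.maximalIdeal_eq_span_p, ← PadicInt.ker_toZMod]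
    exact hx
  simpa using (PadicInt.norm_le_pow_iff_mem_span_pow x 1).mpr hmem

theorem expand_zmod_eq_pow (C : (ZMod p)⟦X⟧) : expand p hp.out.ne_zero C = C ^ p := by
  have h := MvPowerSeries.map_frobenius_expand p hp.out.ne_zero (f := C)
  rwa [ZMod.frobenius_zmod, MvPowerSeries.map_id] at h

theorem norm_coeff_substPow_sub_pow_le {A : ℚ_[p]⟦X⟧} (hA : ∀ k, ‖coeff k A‖ ≤ 1) (k : ℕ) :
    ‖coeff k (substPow p A - A ^ p)‖ ≤ (p : ℝ)⁻¹ := by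
  obtain ⟨B, hB⟩ : ∃ B : ℤ_[p]⟦X⟧, map PadicInt.Coe.ringHom B = A :=
    ⟨mk fun k => ⟨coeff k A, hA k⟩, by
      ext k
      rw [coeff_map]
      exact congrArg PadicInt.Coe.ringHom (coeff_mk k _)⟩
  have hBp : map PadicInt.toZMod (expand p hp.out.ne_zero B - B ^ p) = 0 := by
    rw [map_sub, map_pow, map_expand, expand_zmod_eq_pow, sub_self]
  rw [substPow_eq_expand hp.out.ne_zero, ← hB, ← map_expand, ← map_pow, ← map_sub, coeff_map]
  exact PadicInt.norm_le_inv_of_toZMod_eq_zero (by rw [← coeff_map, hBp, map_zero])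

theorem norm_coeff_le_one_of_X_pow_dvd_sub {F G T : ℚ_[p]⟦X⟧} {n : ℕ} (hn : n ≠ 0)
    (hF₀ : constantCoeff F = 1) (hFG : substPow p F = F ^ p * G)
    (hG : ∀ k, ‖coeff k (G - 1)‖ ≤ (p : ℝ)⁻¹) (hT : ∀ k, ‖coeff k T‖ ≤ 1) (hFT : X ^ n ∣ F - T) :
    ‖coeff n F‖ ≤ 1 := by
  have key := mul_coeff_sub_eq_of_substPow_eq_pow_mul hp.out.one_lt hn hF₀ hFG hFT
  have hkey : ‖(p : ℚ_[p]) * coeff n (F - T)‖ ≤ (p : ℝ)⁻¹ := by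
    rw [key, sub_eq_add_neg]
    refine (IsUltrametricDist.norm_add_le_max _ _).trans (max_le ?_ ?_)
    · exact norm_coeff_substPow_sub_pow_le hT n
    · simpa using norm_coeff_mul_le (norm_coeff_pow_le_one hT p) hG n
  have hFTn : ‖coeff n (F - T)‖ ≤ 1 := by
    rw [norm_mul, Padic.norm_p] at hkey
    exact le_of_mul_le_mul_left (by simpa using hkey) (inv_pos.mpr (Nat.cast_pos.mpr hp.out.pos))
  calc ‖coeff n F‖ = ‖coeff n (F - T) + coeff n T‖ := by rw [map_sub, sub_add_cancel]
    _ ≤ 1 := (IsUltrametricDist.norm_add_le_max _ _).trans (max_le hFTn (hT n))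

theorem norm_coeff_le_one_of_substPow_eq_pow_mul {F G : ℚ_[p]⟦X⟧} (hF₀ : constantCoeff F = 1)
    (hFG : substPow p F = F ^ p * G) (hG : ∀ k, ‖coeff k (G - 1)‖ ≤ (p : ℝ)⁻¹) (k : ℕ) :
    ‖coeff k F‖ ≤ 1 := by
  induction k using Nat.strong_induction_on with
  | _ n ih =>
    rcases eq_or_ne n 0 with rfl | hn
    · simp [hF₀]
    refine norm_coeff_le_one_of_X_pow_dvd_sub (T := trunc n F) hn hF₀ hFG hG (fun k => ?_)
      (X_pow_dvd_iff.mpr fun k hk => ?_)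
    · rw [Polynomial.coeff_coe, coeff_trunc]
      split_ifs with hk
      exacts [ih k hk, by simp]
    · simp [coeff_trunc, hk]

end Padic

/-- corollary of Dieudonné's lemma: if `f ∈ zℚ_p[[z]]` and
`(1/p)·f(z^p) − f(z) ∈ zℤ_p[[z]]`, then `exp(f) ∈ 1 + zℤ_p[[z]]`. -/
theorem statement13 (p : ℕ) [Fact p.Prime]
    (f : PowerSeries ℚ_[p])
    -- `f ∈ zℚ_p[[z]]`
    (hf0 : PowerSeries.constantCoeff f = 0)
    -- `(1/p)·f(z^p) − f(z) ∈ zℤ_p[[z]]`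
    (hint : ∀ k : ℕ,
      ‖PowerSeries.coeff k ((p : ℚ_[p])⁻¹ • substPow p f - f)‖ ≤ 1) :
    -- `exp(f) ∈ 1 + zℤ_p[[z]]`
    PowerSeries.constantCoeff (psExp f) = 1 ∧
    ∀ k : ℕ, ‖PowerSeries.coeff k (psExp f)‖ ≤ 1 := by
  have hp₀ : p ≠ 0 := (Fact.out : p.Prime).ne_zero
  have hG : substPow p f - p • f = (p : ℚ_[p]) • ((p : ℚ_[p])⁻¹ • substPow p f - f) := by
    rw [smul_sub, smul_inv_smul₀ (Nat.cast_ne_zero.mpr hp₀), Nat.cast_smul_eq_nsmul]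
  refine ⟨constantCoeff_psExp f, norm_coeff_le_one_of_substPow_eq_pow_mul (constantCoeff_psExp f)
    (substPow_psExp hp₀ hf0) ?_⟩
  rw [hG]
  exact norm_coeff_psExp_prime_smul_sub_one_le hint
end
end
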